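/- arXiv:2305.04148 — 2 statements merged into one kernel-verified Lean document; each statement's English description precedes it below -/
import Mathlib

section
/- (Product channels are weight contracting, Proposition in Appendix E.) For each j ∈ Fin n let Φ_j be a linear map on 2 × 2 complex matrices with Φ_j(I₂) = I₂ (unital). Let Φ be a linear map on 2^n × 2^n complex matrices satisfying Φ(P_a) = Φ_1(σ_{a 1}) ⊗ ⋯ ⊗ Φ_n(σ_{a n}) (the n-fold Kronecker product) for every string a ∈ (Fin n → Fin 4). Then for all strings a, b with |b| > |a|, tr(P_b * Φ(P_a)) = 0; that is, the Pauli expansion of Φ(P_a) contains no Pauli string of weight greater than |a|. -/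
open Matrix Finset

noncomputable section

/-- The four single-qubit Pauli matrices: σ₀ = I, σ₁ = X, σ₂ = Y, σ₃ = Z. -/
def pauli : Fin 4 → Matrix (Fin 2) (Fin 2) ℂ
  | 0 => 1
  | 1 => !![0, 1; 1, 0]
  | 2 => !![0, -Complex.I; Complex.I, 0]
  | 3 => !![1, 0; 0, -1]

/-- The `n`-qubit Pauli string `P_a = σ_{a 1} ⊗ ⋯ ⊗ σ_{a n}` (n-fold Kronecker product),
a `2^n × 2^n` complex matrix indexed by `Fin n → Fin 2`. -/
def PauliString {n : ℕ} (a : Fin n → Fin 4) :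
    Matrix (Fin n → Fin 2) (Fin n → Fin 2) ℂ :=
  fun i k => ∏ j, pauli (a j) (i j) (k j)

/-- `⟨a,b⟩ ∈ {0,1}`: parity of the number of positions where `a` and `b` anticommute. -/
def ppair {n : ℕ} (a b : Fin n → Fin 4) : ℕ :=
  (Finset.univ.filter fun j => a j ≠ 0 ∧ b j ≠ 0 ∧ a j ≠ b j).card % 2

/-- The weight `|a|` of a Pauli string: the number of non-identity tensor factors. -/
def pweight {n : ℕ} (a : Fin n → Fin 4) : ℕ :=
  (Finset.univ.filter fun j => a j ≠ 0).card

/-!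
Both `P_b` and `Φ(P_a)` are Kronecker products over the qubits, so the trace of their product
factors as `∏ⱼ tr(σ_{b j} Φⱼ(σ_{a j}))`. Since `|b| > |a|` there is a qubit `j` with `a j = 0`
and `b j ≠ 0`; there `Φⱼ(σ₀) = I` by unitality, and the factor is `tr σ_{b j} = 0`.
-/

namespace Matrix

variable {ι R : Type*} [Fintype ι] [CommSemiring R] {m p q : ι → Type*}

def piKronecker (A : ∀ j, Matrix (m j) (p j) R) : Matrix (∀ j, m j) (∀ j, p j) R :=
  fun i k => ∏ j, A j (i j) (k j)

variable [DecidableEq ι]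

theorem piKronecker_mul_piKronecker [∀ j, Fintype (p j)]
    (A : ∀ j, Matrix (m j) (p j) R) (B : ∀ j, Matrix (p j) (q j) R) :
    piKronecker A * piKronecker B = piKronecker fun j => A j * B j := by
  ext i k
  simp only [piKronecker, mul_apply, Fintype.prod_sum, Finset.prod_mul_distrib]

theorem trace_piKronecker [∀ j, Fintype (m j)] (A : ∀ j, Matrix (m j) (m j) R) :
    (piKronecker A).trace = ∏ j, (A j).trace := by
  simp only [trace, diag, piKronecker, Fintype.prod_sum]

end Matrix

theorem pauli_zero : pauli 0 = 1 := rfl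

theorem trace_pauli_of_ne_zero {c : Fin 4} (hc : c ≠ 0) : (pauli c).trace = 0 := by
  fin_cases c <;> simp_all [pauli, trace, Fin.sum_univ_two]

theorem PauliString_eq_piKronecker {n : ℕ} (a : Fin n → Fin 4) :
    PauliString a = piKronecker fun j => pauli (a j) := rfl

theorem exists_eq_zero_ne_zero_of_pweight_lt {n : ℕ} {a b : Fin n → Fin 4}
    (h : pweight a < pweight b) : ∃ j, a j = 0 ∧ b j ≠ 0 := by
  have hsupp : ¬ (univ.filter fun j => b j ≠ 0) ⊆ univ.filter fun j => a j ≠ 0 :=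
    fun hs => (card_le_card hs).not_gt h
  obtain ⟨j, hb, ha⟩ := not_subset.mp hsupp
  simp only [mem_filter, mem_univ, true_and, not_not] at hb ha
  exact ⟨j, ha, hb⟩

/-- Product channels are weight contracting (Appendix E): if `Φ` acts factor-wise via
unital maps `Φ_j`, then the Pauli expansion of `Φ(P_a)` contains no Pauli string of
weight greater than `|a|`. -/
theorem product_channel_weight_contracting {n : ℕ}
    (Φj : Fin n → (Matrix (Fin 2) (Fin 2) ℂ →ₗ[ℂ] Matrix (Fin 2) (Fin 2) ℂ))
    (hunital : ∀ j, Φj j (pauli 0) = pauli 0)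
    (Φ : Matrix (Fin n → Fin 2) (Fin n → Fin 2) ℂ →ₗ[ℂ]
          Matrix (Fin n → Fin 2) (Fin n → Fin 2) ℂ)
    (hΦ : ∀ a : Fin n → Fin 4,
      Φ (PauliString a) = fun i k => ∏ j, (Φj j) (pauli (a j)) (i j) (k j))
    (a b : Fin n → Fin 4) (h : pweight a < pweight b) :
    (PauliString b * Φ (PauliString a)).trace = 0 := by
  obtain ⟨j₀, ha, hb⟩ := exists_eq_zero_ne_zero_of_pweight_lt h
  have hΦa : Φ (PauliString a) = piKronecker fun j => Φj j (pauli (a j)) := hΦ a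
  rw [hΦa, PauliString_eq_piKronecker, piKronecker_mul_piKronecker, trace_piKronecker]
  refine prod_eq_zero (mem_univ j₀) ?_
  rw [ha, hunital, pauli_zero, mul_one]
  exact trace_pauli_of_ne_zero hb
end
end

section
/- (Two-gate noisy Clifford circuit identity from Section VII.) Let 𝒫₁ and 𝒫₂ be linear maps on 2^n × 2^n complex matrices such that 𝒫_i(P_c) = λ_{i,c} • P_c for every string c, where λ_{1,·}, λ_{2,·} : (Fin n → Fin 4) → ℝ. Let U₁, U₂ be 2^n × 2^n unitary matrices, let a be a string, and suppose there exist a string a' and η ∈ {1,-1} with U₂† * P_a * U₂ = η • P_{a'}. Then for every 2^n × 2^n complex matrix ρ: tr( P_a * 𝒫₂( U₂ * 𝒫₁( U₁ * ρ * U₁† ) * U₂† ) ) = λ_{2,a} · λ_{1,a'} · tr( P_a * (U₂ * U₁ * ρ * U₁† * U₂†) ). -/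
open Matrix Finset

noncomputable section

/-- Coefficients of the elementary 2×2 matrices in the Pauli basis. -/
def pc : Fin 2 → Fin 2 → Fin 4 → ℂ
  | 0, 0 => ![1/2, 0, 0, 1/2]
  | 0, 1 => ![0, 1/2, Complex.I/2, 0]
  | 1, 0 => ![0, 1/2, -Complex.I/2, 0]
  | 1, 1 => ![1/2, 0, 0, -1/2]

lemma pc_spec (i k x y : Fin 2) :
    (∑ s : Fin 4, pc i k s * pauli s x y) = if i = x ∧ k = y then 1 else 0 := by
  fin_cases i <;> fin_cases k <;> fin_cases x <;> fin_cases y <;>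
    simp [pc, pauli, Fin.sum_univ_four, Matrix.one_apply] <;> ring_nf <;>
    simp [Complex.I_sq] <;> ring

lemma pauli_trace_pair (s t : Fin 4) :
    (∑ u : Fin 2, ∑ v : Fin 2, pauli s u v * pauli t v u) = if s = t then 2 else 0 := by
  fin_cases s <;> fin_cases t <;>
    simp [pauli, Fin.sum_univ_succ, Matrix.one_apply] <;> ring_nf

lemma trace_pauli_mul {n : ℕ} (a b : Fin n → Fin 4) :
    (PauliString a * PauliString b).trace = if a = b then (2 : ℂ) ^ n else 0 := by
  have e1 : (PauliString a * PauliString b).trace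
      = ∑ x : Fin n → Fin 2, ∑ y : Fin n → Fin 2,
          ∏ j, (pauli (a j) (x j) (y j) * pauli (b j) (y j) (x j)) := by
    simp [Matrix.trace, Matrix.diag, Matrix.mul_apply, PauliString, ← Finset.prod_mul_distrib]
  have step1 : ∀ x : Fin n → Fin 2,
      (∑ y : Fin n → Fin 2, ∏ j, (pauli (a j) (x j) (y j) * pauli (b j) (y j) (x j)))
      = ∏ j, ∑ v : Fin 2, pauli (a j) (x j) v * pauli (b j) v (x j) :=
    fun x => (Fintype.prod_sum (fun j v => pauli (a j) (x j) v * pauli (b j) v (x j))).symm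
  have step2 : (∑ x : Fin n → Fin 2,
      ∏ j, ∑ v : Fin 2, pauli (a j) (x j) v * pauli (b j) v (x j))
      = ∏ j, ∑ u : Fin 2, ∑ v : Fin 2, pauli (a j) u v * pauli (b j) v u :=
    (Fintype.prod_sum (fun j u => ∑ v : Fin 2, pauli (a j) u v * pauli (b j) v u)).symm
  rw [e1]
  simp_rw [step1]
  rw [step2]
  simp_rw [pauli_trace_pair]
  by_cases h : a = b
  · subst h; simp
  · rw [if_neg h]
    obtain ⟨j, hj⟩ := Function.ne_iff.mp h
    exact Finset.prod_eq_zero (Finset.mem_univ j) (by simp [hj])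

lemma std_decomp {n : ℕ} (i k : Fin n → Fin 2) :
    Matrix.single i k (1 : ℂ)
      = ∑ b : Fin n → Fin 4, (∏ j, pc (i j) (k j) (b j)) • PauliString b := by
  ext x y
  have rhs : (∑ b : Fin n → Fin 4, (∏ j, pc (i j) (k j) (b j)) • PauliString b) x y
      = ∑ b : Fin n → Fin 4, ∏ j, (pc (i j) (k j) (b j) * pauli (b j) (x j) (y j)) := by
    simp [Matrix.sum_apply, PauliString, ← Finset.prod_mul_distrib]
  rw [rhs, ← Fintype.prod_sum (fun j s => pc (i j) (k j) s * pauli s (x j) (y j))]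
  simp_rw [pc_spec]
  rw [Matrix.single]
  simp only [Matrix.of_apply]
  by_cases h : i = x ∧ k = y
  · obtain ⟨h1, h2⟩ := h
    subst h1; subst h2
    simp
  · rw [if_neg h]
    rw [not_and_or] at h
    rcases h with h | h
    · obtain ⟨j, hj⟩ := Function.ne_iff.mp h
      symm
      apply Finset.prod_eq_zero (Finset.mem_univ j)
      simp only [hj, false_and, if_false]
    · obtain ⟨j, hj⟩ := Function.ne_iff.mp h
      symm
      apply Finset.prod_eq_zero (Finset.mem_univ j)
      simp only [hj, and_false, if_false]

lemma span_pauli (n : ℕ) :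
    Submodule.span ℂ (Set.range (PauliString (n := n))) = ⊤ := by
  rw [eq_top_iff]
  intro M _
  rw [Matrix.matrix_eq_sum_single M]
  refine Submodule.sum_mem _ fun x _ => Submodule.sum_mem _ fun y _ => ?_
  have h1 : Matrix.single x y (M x y) = M x y • Matrix.single x y (1 : ℂ) := by
    rw [Matrix.smul_single, smul_eq_mul, mul_one]
  rw [h1, std_decomp]
  exact Submodule.smul_mem _ _ (Submodule.sum_mem _ fun b _ =>
    Submodule.smul_mem _ _ (Submodule.subset_span ⟨b, rfl⟩))

lemma key_trace {n : ℕ}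
    (P : Matrix (Fin n → Fin 2) (Fin n → Fin 2) ℂ →ₗ[ℂ]
          Matrix (Fin n → Fin 2) (Fin n → Fin 2) ℂ)
    (lam : (Fin n → Fin 4) → ℝ)
    (h : ∀ c, P (PauliString c) = lam c • PauliString c)
    (a : Fin n → Fin 4) (M : Matrix (Fin n → Fin 2) (Fin n → Fin 2) ℂ) :
    (PauliString a * P M).trace = (lam a : ℂ) * (PauliString a * M).trace := by
  set f : Matrix (Fin n → Fin 2) (Fin n → Fin 2) ℂ →ₗ[ℂ] ℂ :=
    (Matrix.traceLinearMap (Fin n → Fin 2) ℂ ℂ).comp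
      ((LinearMap.mulLeft ℂ (PauliString a)).comp P) with hf
  set g : Matrix (Fin n → Fin 2) (Fin n → Fin 2) ℂ →ₗ[ℂ] ℂ :=
    (lam a : ℂ) • ((Matrix.traceLinearMap (Fin n → Fin 2) ℂ ℂ).comp
      (LinearMap.mulLeft ℂ (PauliString a))) with hg
  have hfg : f = g := by
    apply LinearMap.ext_on (span_pauli n)
    rintro _ ⟨c, rfl⟩
    simp only [hf, hg, LinearMap.comp_apply, LinearMap.mulLeft_apply,
      Matrix.traceLinearMap_apply, LinearMap.smul_apply, h c, Matrix.mul_smul,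
      Matrix.trace_smul, smul_eq_mul]
    by_cases hac : a = c
    · subst hac; rw [Complex.real_smul]
    · rw [trace_pauli_mul, if_neg hac, smul_zero, mul_zero]
  have := congrFun (congrArg (fun (L : _ →ₗ[ℂ] ℂ) => (L : _ → ℂ)) hfg) M
  simpa [hf, hg] using this

lemma trace_conj {n : ℕ} (A U N : Matrix (Fin n → Fin 2) (Fin n → Fin 2) ℂ) :
    (A * (U * N * Uᴴ)).trace = ((Uᴴ * A * U) * N).trace := by
  rw [show A * (U * N * Uᴴ) = (A * U * N) * Uᴴ by
        simp only [Matrix.mul_assoc],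
      Matrix.trace_mul_comm]
  simp only [Matrix.mul_assoc]

/-- Two-gate noisy Clifford circuit identity (Section VII): measuring `P_a` on the output
of the noisy two-gate circuit picks up the factor `λ_{2,a} λ_{1,a'}` relative to the
ideal circuit, where `U₂† P_a U₂ = ±P_{a'}`. -/
theorem noisy_clifford_two_gate {n : ℕ}
    (P1 P2 : Matrix (Fin n → Fin 2) (Fin n → Fin 2) ℂ →ₗ[ℂ]
              Matrix (Fin n → Fin 2) (Fin n → Fin 2) ℂ)
    (lam1 lam2 : (Fin n → Fin 4) → ℝ)
    (h1 : ∀ c, P1 (PauliString c) = lam1 c • PauliString c)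
    (h2 : ∀ c, P2 (PauliString c) = lam2 c • PauliString c)
    (U1 U2 : Matrix (Fin n → Fin 2) (Fin n → Fin 2) ℂ)
    (hU1 : U1 ∈ Matrix.unitaryGroup (Fin n → Fin 2) ℂ)
    (hU2 : U2 ∈ Matrix.unitaryGroup (Fin n → Fin 2) ℂ)
    (a a' : Fin n → Fin 4) (η : ℂ) (hη : η = 1 ∨ η = -1)
    (hconj : U2ᴴ * PauliString a * U2 = η • PauliString a')
    (ρ : Matrix (Fin n → Fin 2) (Fin n → Fin 2) ℂ) :
    (PauliString a * P2 (U2 * P1 (U1 * ρ * U1ᴴ) * U2ᴴ)).trace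
      = (lam2 a : ℂ) * (lam1 a' : ℂ) *
          (PauliString a * (U2 * U1 * ρ * U1ᴴ * U2ᴴ)).trace := by
  set Y := U1 * ρ * U1ᴴ with hY
  have lhs1 : (PauliString a * P2 (U2 * P1 Y * U2ᴴ)).trace
      = (lam2 a : ℂ) * (PauliString a * (U2 * P1 Y * U2ᴴ)).trace :=
    key_trace P2 lam2 h2 a _
  have lhs2 : (PauliString a * (U2 * P1 Y * U2ᴴ)).trace
      = η * ((lam1 a' : ℂ) * (PauliString a' * Y).trace) := by
    rw [trace_conj, hconj, Matrix.smul_mul, Matrix.trace_smul, smul_eq_mul,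
      key_trace P1 lam1 h1 a' Y]
  have rhs1 : U2 * U1 * ρ * U1ᴴ * U2ᴴ = U2 * Y * U2ᴴ := by
    simp only [hY, Matrix.mul_assoc]
  have rhs2 : (PauliString a * (U2 * Y * U2ᴴ)).trace
      = η * (PauliString a' * Y).trace := by
    rw [trace_conj, hconj, Matrix.smul_mul, Matrix.trace_smul, smul_eq_mul]
  rw [lhs1, lhs2, rhs1, rhs2]
  ring
end
end
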